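/- arXiv:1805.02345 — 2 statements merged into one kernel-verified Lean document; each statement's English description precedes it below -/
import Mathlib

section
/- Let G be a finite simple P₄-free graph on n vertices and let D be a minimum dominating set (γ-set) of G. Then n − γ(G) ≤ C_D(G) ≤ 2n − γ(G), where C_D denotes the domination cover number of D. -/
open Finset

variable {α β : Type*}

/-- `D` is a dominating set of `G`: every vertex outside `D` has a neighbor in `D`. -/
def IsDomSet (G : SimpleGraph α) (D : Finset α) : Prop :=
  ∀ v ∉ D, ∃ u ∈ D, G.Adj u v

/-- The domination number `γ(G)`: minimum cardinality of a dominating set. -/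
noncomputable def domNum (G : SimpleGraph α) : ℕ :=
  sInf {n | ∃ D : Finset α, IsDomSet G D ∧ D.card = n}

/-- The degree of vertex `v` in `G`. -/
noncomputable def vdeg (G : SimpleGraph α) (v : α) : ℕ :=
  Nat.card (G.neighborSet v)

/-- The (domination) cover number of a set of vertices `A`: the sum of degrees. -/
noncomputable def coverNum (G : SimpleGraph α) (A : Finset α) : ℕ :=
  ∑ v ∈ A, vdeg G v

/-- `D` is a minimum dominating set (γ-set) of `G`. -/
def IsGammaSet (G : SimpleGraph α) (D : Finset α) : Prop :=
  IsDomSet G D ∧ D.card = domNum G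

/-!
Double counting gives `C_D(G) = ∑ᵤ |N(u) ∩ D|`, the sum running over all vertices. The lower
bound only uses that `D` dominates. For the upper bound, minimality of `D` and `P₄`-freeness
show that a vertex of `D` has at most one neighbour in `D` (two neighbours `w₁, w₂` of `u`,
together with private neighbours of `w₁` and `w₂`, would span an induced `P₄`) and a vertex
outside `D` at most two: if `v ∉ D` sees `a, b, c ∈ D` with `c` adjacent to neither `a` nor `b`,
then `D - {a, b} + {v}` still dominates, because a vertex dominated only by `a` or `b` and not
adjacent to `v` must be adjacent to `c`, or it would start an induced `P₄` ending in `v, c`.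
-/

open SimpleGraph

lemma adj_ends_of_p4Free {G : SimpleGraph α} (hP4 : IsEmpty (pathGraph 4 ↪g G))
    {w x y z : α} (hwx : G.Adj w x) (hxy : G.Adj x y) (hyz : G.Adj y z)
    (hwy : ¬G.Adj w y) (hxz : ¬G.Adj x z) : G.Adj w z := by
  by_contra hwz
  have hwy' : w ≠ y := by rintro rfl; exact hwz hyz
  have hxz' : x ≠ z := by rintro rfl; exact hwz hwx
  have hwz' : w ≠ z := by rintro rfl; exact hwy hyz.symm
  refine hP4.false ⟨⟨![w, x, y, z], fun a b h => ?_⟩, fun {a b} => ?_⟩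
  · fin_cases a <;> fin_cases b <;>
      simp_all [hwx.ne, hxy.ne, hyz.ne, hwx.ne.symm, hxy.ne.symm, hyz.ne.symm, eq_comm]
  · change G.Adj (![w, x, y, z] a) (![w, x, y, z] b) ↔ _
    fin_cases a <;> fin_cases b <;>
      simp [pathGraph_adj, hwx, hxy, hyz, hwy, hwz, hxz, hwx.symm, hxy.symm, hyz.symm,
        G.adj_comm y w, G.adj_comm z w, G.adj_comm z x]

section

variable {G : SimpleGraph α}

lemma vdeg_eq_degree (v : α) [Fintype (G.neighborSet v)] : vdeg G v = G.degree v := by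
  rw [vdeg, Nat.card_eq_fintype_card, card_neighborSet_eq_degree]

lemma coverNum_eq_sum_degree [Fintype α] [DecidableRel G.Adj] (A : Finset α) :
    coverNum G A = ∑ v ∈ A, G.degree v :=
  sum_congr rfl fun v _ => vdeg_eq_degree v

lemma coverNum_eq_sum_card_adj [Fintype α] [DecidableRel G.Adj] (A : Finset α) :
    coverNum G A = ∑ u, #{v ∈ A | G.Adj u v} := by
  simp_rw [coverNum_eq_sum_degree, ← card_neighborFinset_eq_degree, neighborFinset_eq_filter]
  refine (sum_card_bipartiteAbove_eq_sum_card_bipartiteBelow G.Adj).trans ?_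
  simp only [bipartiteBelow, G.adj_comm]

lemma coverNum_add_card_le [Fintype α] [DecidableRel G.Adj] (A : Finset α)
    (hin : ∀ u ∈ A, #{v ∈ A | G.Adj u v} ≤ 1) (hout : ∀ u ∉ A, #{v ∈ A | G.Adj u v} ≤ 2) :
    coverNum G A + #A ≤ 2 * Fintype.card α := by
  classical
  have hin' : ∑ u ∈ A, #{v ∈ A | G.Adj u v} ≤ #A := by
    simpa using sum_le_card_nsmul A _ 1 hin
  have hout' : ∑ u ∈ univ \ A, #{v ∈ A | G.Adj u v} ≤ 2 * #(univ \ A) := by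
    simpa [mul_comm] using
      sum_le_card_nsmul (univ \ A) _ 2 fun u hu => hout u (mem_sdiff.1 hu).2
  have hcompl : #(univ \ A) + #A = Fintype.card α := by
    rw [card_sdiff_add_card_eq_card (subset_univ A), card_univ]
  rw [coverNum_eq_sum_card_adj, ← sum_sdiff (subset_univ A)]
  omega

namespace IsDomSet

variable {D : Finset α}

lemma domNum_le (hD : IsDomSet G D) : domNum G ≤ #D :=
  Nat.sInf_le ⟨D, hD, rfl⟩

lemma card_compl_le_coverNum [Fintype α] (hD : IsDomSet G D) :
    Fintype.card α - #D ≤ coverNum G D := by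
  classical
  have hcover : univ \ D ⊆ D.biUnion fun v => G.neighborFinset v := fun v hv => by
    obtain ⟨u, hu, huv⟩ := hD v (mem_sdiff.1 hv).2
    exact mem_biUnion.2 ⟨u, hu, (G.mem_neighborFinset u v).2 huv⟩
  calc Fintype.card α - #D = #(univ \ D) := by
        rw [card_sdiff_of_subset (subset_univ D), card_univ]
    _ ≤ #(D.biUnion fun v => G.neighborFinset v) := card_le_card hcover
    _ ≤ ∑ v ∈ D, #(G.neighborFinset v) := card_biUnion_le
    _ = coverNum G D := by simp only [card_neighborFinset_eq_degree, coverNum_eq_sum_degree]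

lemma insert_erase_erase (hP4 : IsEmpty (pathGraph 4 ↪g G)) [DecidableEq α]
    (hD : IsDomSet G D) {v a b c : α} (hva : G.Adj v a) (hvb : G.Adj v b) (hvc : G.Adj v c)
    (hc : c ∈ D) (hca : c ≠ a) (hcb : c ≠ b) (hac : ¬G.Adj a c) (hbc : ¬G.Adj b c) :
    IsDomSet G (insert v ((D.erase a).erase b)) := by
  intro y hy
  simp only [mem_insert, mem_erase, not_or, not_and_or, not_not] at hy
  by_cases hvy : G.Adj v y
  · exact ⟨v, mem_insert_self _ _, hvy⟩
  have hya : y ≠ a := by rintro rfl; exact hvy hva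
  have hyb : y ≠ b := by rintro rfl; exact hvy hvb
  have hyD : y ∉ D := by tauto
  obtain ⟨x, hx, hxy⟩ := hD y hyD
  by_cases hxab : x = a ∨ x = b
  · have hyc : G.Adj y c := by
      rcases hxab with rfl | rfl
      · exact adj_ends_of_p4Free hP4 hxy.symm hva.symm hvc (fun h => hvy h.symm) hac
      · exact adj_ends_of_p4Free hP4 hxy.symm hvb.symm hvc (fun h => hvy h.symm) hbc
    exact ⟨c, by simp [hc, hca, hcb], hyc.symm⟩
  · obtain ⟨hxa, hxb⟩ := not_or.1 hxab
    exact ⟨x, by simp [hx, hxa, hxb], hxy⟩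

end IsDomSet

namespace IsGammaSet

variable {D : Finset α}

lemma card_le (hD : IsGammaSet G D) {D' : Finset α} (hD' : IsDomSet G D') : #D ≤ #D' :=
  hD.2 ▸ hD'.domNum_le

lemma exists_private_neighbor (hD : IsGammaSet G D) {u w : α} (hu : u ∈ D) (hw : w ∈ D)
    (huw : G.Adj u w) : ∃ p ∉ D, G.Adj u p ∧ ∀ w ∈ D, G.Adj p w → w = u := by
  classical
  by_contra! h
  suffices IsDomSet G (D.erase u) from (card_erase_lt_of_mem hu).not_ge (hD.card_le this)
  intro v hv
  by_cases hvu : v = u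
  · exact ⟨w, mem_erase.2 ⟨huw.ne.symm, hw⟩, hvu ▸ huw.symm⟩
  have hvD : v ∉ D := fun h => hv (mem_erase.2 ⟨hvu, h⟩)
  obtain ⟨x, hx, hxv⟩ := hD.1 v hvD
  by_cases hxu : x = u
  · obtain ⟨w', hw', hvw', hw'u⟩ := h v hvD (hxu ▸ hxv)
    exact ⟨w', mem_erase.2 ⟨hw'u, hw'⟩, hvw'.symm⟩
  · exact ⟨x, mem_erase.2 ⟨hxu, hx⟩, hxv⟩

lemma eq_of_adj_of_adj (hP4 : IsEmpty (pathGraph 4 ↪g G)) (hD : IsGammaSet G D)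
    {u w₁ w₂ : α} (hu : u ∈ D) (hw₁ : w₁ ∈ D) (hw₂ : w₂ ∈ D)
    (h₁ : G.Adj u w₁) (h₂ : G.Adj u w₂) : w₁ = w₂ := by
  by_contra hne
  obtain ⟨x₁, -, hw₁x₁, hx₁⟩ := hD.exists_private_neighbor hw₁ hu h₁.symm
  obtain ⟨x₂, -, hw₂x₂, hx₂⟩ := hD.exists_private_neighbor hw₂ hu h₂.symm
  have hx₁u : ¬G.Adj x₁ u := fun h => h₁.ne (hx₁ u hu h)
  have hx₁w₂ : ¬G.Adj x₁ w₂ := fun h => hne (hx₁ w₂ hw₂ h).symm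
  have hx₂u : ¬G.Adj x₂ u := fun h => h₂.ne (hx₂ u hu h)
  have hw₁x₂ : ¬G.Adj w₁ x₂ := fun h => hne (hx₂ w₁ hw₁ h.symm)
  have hw₁w₂ : G.Adj w₁ w₂ := by
    by_contra hw₁w₂
    exact hx₁w₂ (adj_ends_of_p4Free hP4 hw₁x₁.symm h₁.symm h₂ hx₁u hw₁w₂)
  have hx₁x₂ : G.Adj x₁ x₂ :=
    adj_ends_of_p4Free hP4 hw₁x₁.symm hw₁w₂ hw₂x₂ hx₁w₂ hw₁x₂
  exact hx₁u (adj_ends_of_p4Free hP4 hx₁x₂ hw₂x₂.symm h₂.symm hx₁w₂ hx₂u)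

lemma adj_of_not_adj (hP4 : IsEmpty (pathGraph 4 ↪g G)) (hD : IsGammaSet G D)
    {v a b c : α} (hv : v ∉ D) (ha : a ∈ D) (hb : b ∈ D) (hc : c ∈ D)
    (hva : G.Adj v a) (hvb : G.Adj v b) (hvc : G.Adj v c)
    (hab : a ≠ b) (hca : c ≠ a) (hcb : c ≠ b) (hac : ¬G.Adj a c) : G.Adj b c := by
  classical
  by_contra hbc
  have hle := hD.card_le (hD.1.insert_erase_erase hP4 hva hvb hvc hc hca hcb hac hbc)
  rw [card_insert_of_notMem (fun h => hv (mem_of_mem_erase (mem_of_mem_erase h))),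
    card_erase_of_mem (mem_erase.2 ⟨hab.symm, hb⟩), card_erase_of_mem ha] at hle
  have := one_lt_card.2 ⟨a, ha, b, hb, hab⟩
  omega

lemma card_filter_adj_le_one (hP4 : IsEmpty (pathGraph 4 ↪g G)) (hD : IsGammaSet G D)
    [DecidableRel G.Adj] {u : α} (hu : u ∈ D) : #{v ∈ D | G.Adj u v} ≤ 1 :=
  card_le_one.2 fun w₁ h₁ w₂ h₂ => by
    rw [mem_filter] at h₁ h₂
    exact hD.eq_of_adj_of_adj hP4 hu h₁.1 h₂.1 h₁.2 h₂.2

lemma card_filter_adj_le_two (hP4 : IsEmpty (pathGraph 4 ↪g G)) (hD : IsGammaSet G D)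
    [DecidableRel G.Adj] {v : α} (hv : v ∉ D) : #{u ∈ D | G.Adj v u} ≤ 2 := by
  by_contra! h
  obtain ⟨a, ha, b, hb, c, hc, hab, hac, hbc⟩ := two_lt_card.1 h
  rw [mem_filter] at ha hb hc
  by_cases hab' : G.Adj a b
  · have hac' : ¬G.Adj a c := fun h => hbc (hD.eq_of_adj_of_adj hP4 ha.1 hb.1 hc.1 hab' h)
    have hbc' :=
      hD.adj_of_not_adj hP4 hv ha.1 hb.1 hc.1 ha.2 hb.2 hc.2 hab hac.symm hbc.symm hac'
    exact hac (hD.eq_of_adj_of_adj hP4 hb.1 ha.1 hc.1 hab'.symm hbc')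
  · have hcb := hD.adj_of_not_adj hP4 hv ha.1 hc.1 hb.1 ha.2 hc.2 hb.2 hac hab.symm hbc hab'
    have hca :=
      hD.adj_of_not_adj hP4 hv hb.1 hc.1 ha.1 hb.2 hc.2 ha.2 hbc hab hac (fun h => hab' h.symm)
    exact hab (hD.eq_of_adj_of_adj hP4 hc.1 ha.1 hb.1 hca hcb)

end IsGammaSet

end

/-- For a finite `P₄`-free graph `G` on `n` vertices (no induced subgraph
isomorphic to the path on 4 vertices), every minimum dominating set `D`
satisfies `n − γ(G) ≤ C_D(G) ≤ 2n − γ(G)`. -/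
theorem gammaSet_coverNum_bounds_of_p4Free [Fintype α] (G : SimpleGraph α)
    (hP4 : IsEmpty (SimpleGraph.pathGraph 4 ↪g G))
    (D : Finset α) (hD : IsGammaSet G D) :
    Fintype.card α - domNum G ≤ coverNum G D ∧
      coverNum G D ≤ 2 * Fintype.card α - domNum G := by
  classical
  rw [← hD.2]
  refine ⟨hD.1.card_compl_le_coverNum, ?_⟩
  have := coverNum_add_card_le D (fun u hu => hD.card_filter_adj_le_one hP4 hu)
    (fun v hv => hD.card_filter_adj_le_two hP4 hv)
  omega
end

section
/- Let G and H be finite simple graphs, let S be a minimum dominating set (γ-set) of G, and let h ∈ V(H) be a vertex adjacent to every other vertex of H (so {h} is a dominating set of H). Then D = S × {h} is a dominating set of the lexicographic product G∘H, and no dominating set of G∘H has cardinality less than |S|; in particular γ(G∘H) = γ(G). -/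
open Finset

variable {α β : Type*}

/-- The lexicographic product `G ∘ H` of two simple graphs. -/
def lexProd (G : SimpleGraph α) (H : SimpleGraph β) : SimpleGraph (α × β) where
  Adj a b := G.Adj a.1 b.1 ∨ (a.1 = b.1 ∧ H.Adj a.2 b.2)
  symm := by
    constructor
    rintro a b (h | ⟨h1, h2⟩)
    · exact Or.inl h.symm
    · exact Or.inr ⟨h1.symm, h2.symm⟩
  loopless := by
    constructor
    rintro a (h | ⟨_, h⟩)
    · exact G.loopless.irrefl _ h
    · exact H.loopless.irrefl _ h

theorem domNum_le_card {G : SimpleGraph α} {D : Finset α} (hD : IsDomSet G D) :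
    domNum G ≤ D.card :=
  Nat.sInf_le ⟨D, hD, rfl⟩

theorem exists_isDomSet_card_eq_domNum {G : SimpleGraph α} {D : Finset α} (hD : IsDomSet G D) :
    ∃ D' : Finset α, IsDomSet G D' ∧ D'.card = domNum G :=
  Nat.sInf_mem (s := {n | ∃ D : Finset α, IsDomSet G D ∧ D.card = n})
    ⟨D.card, D, hD, rfl⟩

theorem IsGammaSet.card_le_s10 {G : SimpleGraph α} {S D : Finset α} (hS : IsGammaSet G S)
    (hD : IsDomSet G D) : S.card ≤ D.card :=
  hS.2 ▸ domNum_le_card hD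

theorem IsDomSet.lexProd_prod_singleton {G : SimpleGraph α} {H : SimpleGraph β} {S : Finset α}
    (hS : IsDomSet G S) {h : β} (hh : ∀ x : β, x ≠ h → H.Adj h x) :
    IsDomSet (lexProd G H) (S ×ˢ {h}) := by
  rintro ⟨a, x⟩ hax
  by_cases ha : a ∈ S
  · have hx : x ≠ h := fun hxh => hax (mem_product.2 ⟨ha, mem_singleton.2 hxh⟩)
    exact ⟨(a, h), mem_product.2 ⟨ha, mem_singleton_self h⟩, Or.inr ⟨rfl, hh x hx⟩⟩
  · obtain ⟨u, hu, hua⟩ := hS a ha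
    exact ⟨(u, h), mem_product.2 ⟨hu, mem_singleton_self h⟩, Or.inl hua⟩

/-- If `v` is no first coordinate of `D`, then no vertex of `D` lies in the fibre of `(v, y)`,
so `(v, y)` is dominated along an edge of `G`. -/
theorem IsDomSet.image_fst_of_lexProd [DecidableEq α] [Nonempty β] {G : SimpleGraph α}
    {H : SimpleGraph β} {D : Finset (α × β)} (hD : IsDomSet (lexProd G H) D) :
    IsDomSet G (D.image Prod.fst) := by
  intro v hv
  obtain ⟨y⟩ := ‹Nonempty β›
  have hvy : (v, y) ∉ D := fun h => hv (mem_image_of_mem Prod.fst h)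
  obtain ⟨⟨u, z⟩, huz, hadj⟩ := hD (v, y) hvy
  have hu : u ∈ D.image Prod.fst := mem_image_of_mem Prod.fst huz
  rcases hadj with hG | ⟨rfl, -⟩
  · exact ⟨u, hu, hG⟩
  · exact absurd hu hv

theorem card_le_of_isDomSet_lexProd [Nonempty β] {G : SimpleGraph α} {H : SimpleGraph β}
    {S : Finset α} (hS : IsGammaSet G S) {D : Finset (α × β)} (hD : IsDomSet (lexProd G H) D) :
    S.card ≤ D.card := by
  classical
  exact (hS.card_le_s10 hD.image_fst_of_lexProd).trans card_image_le

theorem lexProd_domSet_of_universal_vertex_general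
    (G : SimpleGraph α) (H : SimpleGraph β)
    (S : Finset α) (hS : IsGammaSet G S)
    (h : β) (hh : ∀ x : β, x ≠ h → H.Adj h x) :
    IsDomSet (lexProd G H) (S ×ˢ {h}) ∧
    (∀ D' : Finset (α × β), IsDomSet (lexProd G H) D' → S.card ≤ D'.card) ∧
    domNum (lexProd G H) = domNum G := by
  have : Nonempty β := ⟨h⟩
  have hdom := hS.1.lexProd_prod_singleton hh
  have hlow (D' : Finset (α × β)) (hD' : IsDomSet (lexProd G H) D') : S.card ≤ D'.card :=
    card_le_of_isDomSet_lexProd hS hD'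
  refine ⟨hdom, hlow, le_antisymm ?_ ?_⟩
  · calc domNum (lexProd G H) ≤ (S ×ˢ {h}).card := domNum_le_card hdom
      _ = domNum G := by rw [card_product, card_singleton, mul_one, hS.2]
  · obtain ⟨D', hD', hcard⟩ := exists_isDomSet_card_eq_domNum hdom
    exact hcard ▸ hS.2 ▸ hlow D' hD'

/-- If `S` is a minimum dominating set of `G` and `h ∈ V(H)` dominates all of `H`
(it is adjacent to every other vertex of `H`), then `D = S × {h}` is a dominating
set of `G ∘ H`, no dominating set of `G ∘ H` has fewer than `|S|` vertices, and
`γ(G ∘ H) = γ(G)`. -/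
theorem lexProd_domSet_of_universal_vertex [Fintype α] [Fintype β]
    (G : SimpleGraph α) (H : SimpleGraph β)
    (S : Finset α) (hS : IsGammaSet G S)
    (h : β) (hh : ∀ x : β, x ≠ h → H.Adj h x) :
    IsDomSet (lexProd G H) (S ×ˢ {h}) ∧
    (∀ D' : Finset (α × β), IsDomSet (lexProd G H) D' → S.card ≤ D'.card) ∧
    domNum (lexProd G H) = domNum G :=
  lexProd_domSet_of_universal_vertex_general G H S hS h hh
end
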